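/- Let X_n, X : Ω → D be maps from a complete probability space into a complete metric space D. If each X_n is Borel measurable and tight (its law is tight), and d(X_n, X) → 0 in outer probability, then X is Borel measurable and tight. -/
import Mathlib


open MeasureTheory Filter
open scoped ENNReal

/-- A Borel measurable map into a metric space is tight if, for every `ε > 0`,
there is a compact set containing the values except on a set of probability `< ε`. -/
def TightMap {Ω D : Type*} [MeasurableSpace Ω] [MetricSpace D]
    (μ : Measure Ω) (X : Ω → D) : Prop :=
  ∀ ε : ℝ≥0∞, 0 < ε → ∃ K : Set D, IsCompact K ∧ μ {ω | X ω ∉ K} < ε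

theorem measurable_tight_of_outer_prob_limit
    {Ω D : Type*} [MeasurableSpace Ω] [MetricSpace D] [CompleteSpace D]
    [MeasurableSpace D] [BorelSpace D]
    (μ : Measure Ω) [IsProbabilityMeasure μ] (hcomp : μ.IsComplete)
    (X : ℕ → Ω → D) (Xlim : Ω → D)
    (hmeas : ∀ n, Measurable (X n))
    (htight : ∀ n, TightMap μ (X n))
    (houter : ∀ δ : ℝ, 0 < δ →
      Tendsto (fun n => μ.toOuterMeasure {ω | δ ≤ dist (X n ω) (Xlim ω)}) atTop (nhds 0)) :
    Measurable Xlim ∧ TightMap μ Xlim := by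
  haveI := hcomp
  have houter' : ∀ δ : ℝ, 0 < δ → ∀ c : ℝ≥0∞, 0 < c →
      ∃ n, μ {ω | δ ≤ dist (X n ω) (Xlim ω)} < c := by
    intro δ hδ c hc
    have h := (houter δ hδ).eventually (gt_mem_nhds hc)
    simpa [Measure.coe_toOuterMeasure] using h.exists
  have hhalf : (0:ℝ≥0∞) < 2⁻¹ := by norm_num
  -- Part 1: measurability
  have hXm : Measurable Xlim := by
    have hsel : ∀ k : ℕ, ∃ n, μ {ω | (2⁻¹:ℝ)^k ≤ dist (X n ω) (Xlim ω)} < (2⁻¹:ℝ≥0∞)^k :=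
      fun k => houter' _ (by positivity) _ (ENNReal.pow_pos hhalf k)
    choose n hn using hsel
    set A : ℕ → Set Ω := fun k => {ω | (2⁻¹:ℝ)^k ≤ dist (X (n k) ω) (Xlim ω)} with hA
    set T : ℕ → Set Ω := fun k => toMeasurable μ (A k) with hT
    have hTnull : μ (limsup T atTop) = 0 := by
      apply measure_limsup_atTop_eq_zero
      have hle : ∑' k, μ (T k) ≤ ∑' k : ℕ, (2⁻¹:ℝ≥0∞)^k :=
        ENNReal.tsum_le_tsum fun k => by
          rw [hT, measure_toMeasurable]; exact (hn k).le
      refine (lt_of_le_of_lt hle ?_).ne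
      rw [ENNReal.tsum_geometric]
      exact ENNReal.inv_lt_top.mpr (by norm_num)
    have hae : ∀ᵐ ω ∂μ, Tendsto (fun k => X (n k) ω) atTop (nhds (Xlim ω)) := by
      refine measure_mono_null (fun ω hω => ?_) hTnull
      by_contra hmem
      rw [limsup_eq_iInf_iSup_of_nat] at hmem
      simp only [Set.iInf_eq_iInter, Set.iSup_eq_iUnion, Set.mem_iInter, Set.mem_iUnion,
        not_forall, not_exists] at hmem
      obtain ⟨j, hj⟩ := hmem
      apply hω
      have hd : ∀ k ≥ j, dist (X (n k) ω) (Xlim ω) < (2⁻¹:ℝ)^k := by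
        intro k hk
        by_contra hge
        exact hj k hk (subset_toMeasurable μ (A k) (not_lt.mp hge))
      simp only [Set.mem_setOf_eq]
      rw [tendsto_iff_dist_tendsto_zero]
      apply squeeze_zero' (Eventually.of_forall fun k => dist_nonneg)
        (eventually_atTop.mpr ⟨j, fun k hk => (hd k hk).le⟩)
      exact tendsto_pow_atTop_nhds_zero_of_lt_one (by norm_num) (by norm_num)
    exact aemeasurable_iff_measurable.mp
      (aemeasurable_of_tendsto_metrizable_ae atTop (fun k => (hmeas (n k)).aemeasurable) hae)
  refine ⟨hXm, ?_⟩
  -- Part 2: tightness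
  intro ε hε
  obtain ⟨N, hN⟩ := ENNReal.exists_inv_two_pow_lt hε.ne'
  set ε' : ℝ≥0∞ := 2⁻¹ ^ (N + 2) with hε'def
  have hε'pos : 0 < ε' := ENNReal.pow_pos hhalf _
  have hpos : ∀ k : ℕ, (0:ℝ≥0∞) < ε' * 2⁻¹ ^ k :=
    fun k => ENNReal.mul_pos hε'pos.ne' (ENNReal.pow_pos hhalf k).ne'
  have hsel : ∀ k : ℕ, ∃ mk, μ {ω | (2⁻¹:ℝ)^k ≤ dist (X mk ω) (Xlim ω)} < ε' * 2⁻¹ ^ k :=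
    fun k => houter' _ (by positivity) _ (hpos k)
  choose m hm using hsel
  choose K hKc hKm using fun k => htight (m k) _ (hpos k)
  refine ⟨⋂ k, Metric.cthickening ((2⁻¹:ℝ)^k) (K k), ?_, ?_⟩
  · refine TotallyBounded.isCompact_of_isClosed ?_
      (isClosed_iInter fun k => Metric.isClosed_cthickening)
    rw [Metric.totallyBounded_iff]
    intro r hr
    obtain ⟨k, hk⟩ : ∃ k : ℕ, ((2:ℝ)⁻¹) ^ k < r / 3 :=
      exists_pow_lt_of_lt_one (by positivity) (by norm_num)
    have hpk : (0:ℝ) < 2⁻¹ ^ k := by positivity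
    obtain ⟨t, htf, htc⟩ := Metric.totallyBounded_iff.mp (hKc k).totallyBounded _ hpk
    refine ⟨t, htf, fun x hx => ?_⟩
    have hx' : x ∈ Metric.cthickening ((2⁻¹:ℝ)^k) (K k) := Set.mem_iInter.mp hx k
    have hx2 : x ∈ Metric.thickening (2 * (2⁻¹:ℝ)^k) (K k) :=
      Metric.cthickening_subset_thickening' (by positivity) (by linarith) _ hx'
    obtain ⟨z, hz, hdz⟩ := Metric.mem_thickening_iff.mp hx2
    obtain ⟨y, hyt, hy⟩ := Set.mem_iUnion₂.mp (htc hz)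
    refine Set.mem_iUnion₂.mpr ⟨y, hyt, ?_⟩
    have hzy : dist z y < 2⁻¹ ^ k := Metric.mem_ball.mp hy
    have hxy : dist x y < r := by
      have := dist_triangle x z y
      linarith
    exact Metric.mem_ball.mpr hxy
  · have hsub : {ω | Xlim ω ∉ ⋂ k, Metric.cthickening ((2⁻¹:ℝ)^k) (K k)} ⊆
        ⋃ k, ({ω | (2⁻¹:ℝ)^k ≤ dist (X (m k) ω) (Xlim ω)} ∪ {ω | X (m k) ω ∉ K k}) := by
      intro ω hω
      simp only [Set.mem_setOf_eq, Set.mem_iInter, not_forall] at hω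
      obtain ⟨k, hk⟩ := hω
      refine Set.mem_iUnion.mpr ⟨k, ?_⟩
      by_contra h
      simp only [Set.mem_union, Set.mem_setOf_eq, not_or, not_le, not_not] at h
      exact hk (Metric.mem_cthickening_of_dist_le _ _ _ _ h.2
        (by rw [dist_comm]; exact h.1.le))
    have hsum : μ {ω | Xlim ω ∉ ⋂ k, Metric.cthickening ((2⁻¹:ℝ)^k) (K k)} ≤
        ∑' k : ℕ, (ε' * 2⁻¹ ^ k + ε' * 2⁻¹ ^ k) := by
      refine (measure_mono hsub).trans ((measure_iUnion_le _).trans ?_)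
      exact ENNReal.tsum_le_tsum fun k =>
        (measure_union_le _ _).trans (add_le_add (hm k).le (hKm k).le)
    refine lt_of_le_of_lt hsum ?_
    have hgeom : ∑' k : ℕ, ((2:ℝ≥0∞)⁻¹) ^ k = 2 := by
      rw [ENNReal.tsum_geometric, ENNReal.one_sub_inv_two]
      simp
    calc ∑' k : ℕ, (ε' * 2⁻¹ ^ k + ε' * 2⁻¹ ^ k)
        = ε' * 2 + ε' * 2 := by
          rw [ENNReal.tsum_add, ENNReal.tsum_mul_left, hgeom]
      _ = 2⁻¹ ^ N := by
          rw [hε'def, pow_add]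
          rw [show ((2:ℝ≥0∞)⁻¹) ^ 2 = 4⁻¹ by rw [← ENNReal.inv_pow]; norm_num]
          rw [← mul_add, mul_assoc]
          rw [show ((4:ℝ≥0∞)⁻¹ * (2 + 2) : ℝ≥0∞) = 1 by
            rw [show ((2:ℝ≥0∞)+2) = 4 by norm_num];
            exact ENNReal.inv_mul_cancel (by norm_num) (by norm_num)]
          rw [mul_one]
      _ < ε := hN
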